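/- If c > 0 and α, β, γ ∈ ℚπ with sin α sin β ≠ 0 satisfy cosh c = (cos α cos β + cos γ)/(sin α sin β), then c is transcendental. -/
import Mathlib


open Real

private lemma algC_add {x y : ℂ} (hx : IsAlgebraic ℚ x) (hy : IsAlgebraic ℚ y) :
    IsAlgebraic ℚ (x + y) :=
  isAlgebraic_iff_isIntegral.mpr
    ((isAlgebraic_iff_isIntegral.mp hx).add (isAlgebraic_iff_isIntegral.mp hy))

private lemma algC_mul {x y : ℂ} (hx : IsAlgebraic ℚ x) (hy : IsAlgebraic ℚ y) :
    IsAlgebraic ℚ (x * y) :=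
  isAlgebraic_iff_isIntegral.mpr
    ((isAlgebraic_iff_isIntegral.mp hx).mul (isAlgebraic_iff_isIntegral.mp hy))

private lemma algC_neg {x : ℂ} (hx : IsAlgebraic ℚ x) : IsAlgebraic ℚ (-x) :=
  isAlgebraic_iff_isIntegral.mpr (isAlgebraic_iff_isIntegral.mp hx).neg

private lemma algC_sub {x y : ℂ} (hx : IsAlgebraic ℚ x) (hy : IsAlgebraic ℚ y) :
    IsAlgebraic ℚ (x - y) := by
  rw [sub_eq_add_neg]; exact algC_add hx (algC_neg hy)

private lemma algC_div {x y : ℂ} (hx : IsAlgebraic ℚ x) (hy : IsAlgebraic ℚ y) :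
    IsAlgebraic ℚ (x / y) := by
  rw [div_eq_mul_inv]; exact algC_mul hx hy.inv

private lemma algC_I : IsAlgebraic ℚ Complex.I :=
  ⟨Polynomial.X ^ 2 + 1, by
    intro h
    have := congrArg (Polynomial.coeff · 0) h
    simp at this, by simp⟩

private lemma algC_exp_rat_pi (q : ℚ) : IsAlgebraic ℚ (Complex.exp (q * π * Complex.I)) := by
  apply IsAlgebraic.of_pow (n := 2 * q.den) (by positivity)
  rw [← Complex.exp_nat_mul]
  have hden : ((q.den : ℂ)) * (q : ℂ) = (q.num : ℂ) := by
    rw [Rat.cast_def]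
    have h0 : (q.den : ℂ) ≠ 0 := Nat.cast_ne_zero.mpr q.den_nz
    field_simp
  have : ((2 * q.den : ℕ) : ℂ) * ((q : ℂ) * (π : ℂ) * Complex.I)
      = (q.num : ℤ) * (2 * (π : ℂ) * Complex.I) := by
    push_cast
    rw [show ((2 : ℂ) * q.den) * ((q : ℂ) * π * Complex.I)
        = 2 * ((q.den : ℂ) * (q : ℂ)) * π * Complex.I by ring, hden]
    ring
  rw [this, Complex.exp_int_mul_two_pi_mul_I]
  exact isAlgebraic_one

set_option linter.unusedTactic false

private lemma algC_exp_neg_rat_pi (q : ℚ) :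
    IsAlgebraic ℚ (Complex.exp (-((q : ℂ) * π) * Complex.I)) := by
  have := algC_exp_rat_pi (-q)
  simpa [neg_mul] using this

private lemma algC_cos_rat_pi (q : ℚ) : IsAlgebraic ℚ ((Real.cos ((q : ℝ) * π) : ℂ)) := by
  rw [Complex.ofReal_cos]
  have h : ((((q : ℝ) * π : ℝ)) : ℂ) = (q : ℂ) * (π : ℂ) := by push_cast; ring
  rw [Complex.cos, h]
  exact algC_div (algC_add (algC_exp_rat_pi q) (algC_exp_neg_rat_pi q))
    (isAlgebraic_nat 2)

private lemma algC_sin_rat_pi (q : ℚ) : IsAlgebraic ℚ ((Real.sin ((q : ℝ) * π) : ℂ)) := by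
  rw [Complex.ofReal_sin]
  have h : ((((q : ℝ) * π : ℝ)) : ℂ) = (q : ℂ) * (π : ℂ) := by push_cast; ring
  rw [Complex.sin, h]
  exact algC_div (algC_mul (algC_sub (algC_exp_neg_rat_pi q) (algC_exp_rat_pi q)) algC_I)
    (isAlgebraic_nat 2)

theorem transcendental_of_hloc2
    (lindemann : ∀ (n : ℕ) (α c : Fin n → ℂ), Function.Injective α →
      (∀ i, IsAlgebraic ℚ (α i)) → (∀ i, IsAlgebraic ℚ (c i)) →
      (∑ i, c i * Complex.exp (α i)) = 0 → ∀ i, c i = 0)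
    (α β γ c : ℝ) (hc : 0 < c)
    (hαQ : ∃ q : ℚ, α = (q : ℝ) * π) (hβQ : ∃ q : ℚ, β = (q : ℝ) * π)
    (hγQ : ∃ q : ℚ, γ = (q : ℝ) * π)
    (hsin : Real.sin α * Real.sin β ≠ 0)
    (hloc2 : Real.cosh c = (Real.cos α * Real.cos β + Real.cos γ) / (Real.sin α * Real.sin β)) :
    Transcendental ℚ c := by
  intro halg
  obtain ⟨qa, rfl⟩ := hαQ
  obtain ⟨qb, rfl⟩ := hβQ
  obtain ⟨qg, rfl⟩ := hγQ
  -- cosh c is algebraic as a complex number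
  have hA : IsAlgebraic ℚ ((Real.cosh c : ℂ)) := by
    rw [hloc2, Complex.ofReal_div, Complex.ofReal_add, Complex.ofReal_mul,
      Complex.ofReal_mul]
    exact algC_div (algC_add (algC_mul (algC_cos_rat_pi qa) (algC_cos_rat_pi qb))
      (algC_cos_rat_pi qg)) (algC_mul (algC_sin_rat_pi qa) (algC_sin_rat_pi qb))
  -- c is algebraic as a complex number
  have hcC : IsAlgebraic ℚ ((c : ℝ) : ℂ) := by
    have : ((c : ℝ) : ℂ) = algebraMap ℝ ℂ c := rfl
    rw [this]
    exact (isAlgebraic_algebraMap_iff (algebraMap ℝ ℂ).injective).mpr halg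
  set A : ℂ := (Real.cosh c : ℂ) with hAdef
  have hcne : (c : ℂ) ≠ 0 := by
    simp only [ne_eq, Complex.ofReal_eq_zero]; linarith
  have hcne2 : (c : ℂ) ≠ -(c : ℂ) := by
    rw [← Complex.ofReal_neg, ne_eq, Complex.ofReal_inj]
    intro h; linarith
  have hsum : (∑ i : Fin 3, (![1, 1, -2 * A] i) * Complex.exp (![(c : ℂ), -c, 0] i)) = 0 := by
    simp [Fin.sum_univ_three]
    have : A = (Complex.exp c + Complex.exp (-c)) / 2 := by
      rw [hAdef, Complex.ofReal_cosh, Complex.cosh]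
    rw [this]
    ring
  have hinj : Function.Injective (![(c : ℂ), -c, 0] : Fin 3 → ℂ) := by
    have h3 : -(c : ℂ) ≠ 0 := neg_ne_zero.mpr hcne
    intro i j hij
    fin_cases i <;> fin_cases j <;>
      simp only [Matrix.cons_val_zero, Matrix.cons_val_one, Matrix.head_cons,
        Matrix.cons_val_two, Matrix.tail_cons] at hij <;>
      first
        | rfl
        | exact absurd hij hcne
        | exact absurd hij.symm hcne
        | exact absurd hij hcne2
        | exact absurd hij.symm hcne2
        | exact absurd hij h3
        | exact absurd hij.symm h3
  have halgα : ∀ i, IsAlgebraic ℚ ((![(c : ℂ), -c, 0] : Fin 3 → ℂ) i) := by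
    intro i; fin_cases i
    · exact hcC
    · exact algC_neg hcC
    · exact isAlgebraic_zero
  have halgc : ∀ i, IsAlgebraic ℚ ((![1, 1, -2 * A] : Fin 3 → ℂ) i) := by
    intro i; fin_cases i
    · exact isAlgebraic_one
    · exact isAlgebraic_one
    · exact algC_mul (algC_neg (isAlgebraic_nat 2)) hA
  have := lindemann 3 _ _ hinj halgα halgc hsum 0
  simp at this
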